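/- arXiv:2011.00503 — 4 statements merged into one kernel-verified Lean document; each statement's English description precedes it below -/
import Mathlib

section
/- Let n, h > 0 be real numbers, let r ≥ 1 be a natural number, let ℓ_1, …, ℓ_r be pairwise distinct natural numbers, and for each j let B_j ⊆ ℝ² be the closed axis-parallel rectangle [a_j, a_j + n/2^{ℓ_j}] × [c_j, c_j + h·2^{ℓ_j}]. If the intersection B_1 ∩ … ∩ B_r is nonempty, then its two-dimensional Lebesgue measure is at most 2·n·h/2^r. (This is the geometric core of the proof of the first-type forbidden region lemma and of Lemma 3: the intersection is contained in a rectangle whose width is the minimum width n/2^{max ℓ_j} and whose height is the minimum height h·2^{min ℓ_j}, and max ℓ_j − min ℓ_j ≥ r − 1 since the ℓ_j are distinct.) -/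
open MeasureTheory

/-- The geometric core of Lemma 3 and of the first-type forbidden region lemma:
the intersection of `r` axis-parallel rectangles of widths `n/2^{ℓ_j}` and
heights `h·2^{ℓ_j}` with pairwise distinct `ℓ_j`, if nonempty, has area at most
`2·n·h/2^r`. -/
theorem inter_rectangles_area_bound (n h : ℝ) (hn : 0 < n) (hh : 0 < h)
    (r : ℕ) (hr : 1 ≤ r) (ℓ : Fin r → ℕ) (hℓ : Function.Injective ℓ)
    (a c : Fin r → ℝ)
    (B : Fin r → Set (ℝ × ℝ))
    (hB : ∀ j, B j = Set.Icc (a j) (a j + n / 2 ^ (ℓ j)) ×ˢ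
                     Set.Icc (c j) (c j + h * 2 ^ (ℓ j)))
    (hne : (⋂ j, B j).Nonempty) :
    volume (⋂ j, B j) ≤ ENNReal.ofReal (2 * n * h / 2 ^ r) := by
  haveI : NeZero r := ⟨by omega⟩
  set S : Finset ℕ := Finset.univ.image ℓ with hS
  have Sne : S.Nonempty := ⟨ℓ ⟨0, by omega⟩, Finset.mem_image_of_mem _ (Finset.mem_univ _)⟩
  set m := S.min' Sne with hm
  set M := S.max' Sne with hMdef
  obtain ⟨jm, _, hjm⟩ := Finset.mem_image.mp (S.min'_mem Sne)
  obtain ⟨jM, _, hjM⟩ := Finset.mem_image.mp (S.max'_mem Sne)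
  -- cardinality: r ≤ M - m + 1
  have hcard : S.card = r := by
    rw [hS, Finset.card_image_of_injective _ hℓ, Finset.card_univ, Fintype.card_fin]
  have hsub : S ⊆ Finset.Icc m M := by
    intro x hx
    exact Finset.mem_Icc.mpr ⟨S.min'_le x hx, S.le_max' x hx⟩
  have hmM : m ≤ M := S.min'_le M (S.max'_mem Sne)
  have hrle : m + r ≤ M + 1 := by
    have := Finset.card_le_card hsub
    rw [hcard, Nat.card_Icc] at this
    omega
  -- containment
  have hsubset : (⋂ j, B j) ⊆
      Set.Icc (a jM) (a jM + n / 2 ^ M) ×ˢ Set.Icc (c jm) (c jm + h * 2 ^ m) := by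
    intro x hx
    have h1 : x ∈ B jM := Set.mem_iInter.mp hx jM
    have h2 : x ∈ B jm := Set.mem_iInter.mp hx jm
    rw [hB jM, hjM] at h1
    rw [hB jm, hjm] at h2
    exact ⟨h1.1, h2.2⟩
  refine (measure_mono hsubset).trans ?_
  rw [show (volume : Measure (ℝ × ℝ)) = Measure.prod volume volume from rfl,
    Measure.prod_prod, Real.volume_Icc, Real.volume_Icc]
  have hw : (0:ℝ) ≤ n / 2 ^ M := by positivity
  have hh2 : (0:ℝ) ≤ h * 2 ^ m := by positivity
  rw [show a jM + n / 2 ^ M - a jM = n / 2 ^ M by ring,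
    show c jm + h * 2 ^ m - c jm = h * 2 ^ m by ring,
    ← ENNReal.ofReal_mul hw]
  apply ENNReal.ofReal_le_ofReal
  rw [div_mul_eq_mul_div, div_le_div_iff₀ (by positivity) (by positivity)]
  have hpow : (2:ℝ) ^ (m + r) ≤ 2 ^ (M + 1) :=
    pow_le_pow_right₀ (by norm_num) hrle
  calc n * (h * 2 ^ m) * 2 ^ r = n * h * 2 ^ (m + r) := by rw [pow_add]; ring
    _ ≤ n * h * 2 ^ (M + 1) := by
        apply mul_le_mul_of_nonneg_left hpow (by positivity)
    _ = 2 * n * h * 2 ^ M := by rw [pow_succ]; ring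
end

section
/- Let T be a finite rooted tree in which every node has at most two children (e.g., an element of Mathlib's binary tree type Tree Bool, with a node marked when its label is true), and let k ≥ 1. If T contains at least k marked nodes, then there exists a node v of T such that the subtree rooted at v contains at least k and at most 2k − 1 marked nodes. (This is the greedy decomposition step in the proof of Lemma 4: the lowest node whose subtree contains at least k marked nodes has at most 2(k−1)+1 = 2k−1 marked nodes in its subtree, since each of its at most two children has fewer than k.) -/
/-- The number of marked (label `true`) nodes of a binary tree. -/
def markedCount : Tree Bool → ℕ
  | BinaryTree.nil => 0
  | BinaryTree.node b l r => (if b then 1 else 0) + markedCount l + markedCount r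

/-- `isSubtree s t` holds when `s` is the subtree of `t` rooted at some node
of `t` (possibly `t` itself). -/
def isSubtree : Tree Bool → Tree Bool → Prop
  | s, BinaryTree.nil => s = BinaryTree.nil
  | s, BinaryTree.node b l r => s = BinaryTree.node b l r ∨ isSubtree s l ∨ isSubtree s r

/-! Take the lowest node whose subtree carries at least `k` marks: each of its two children
carries at most `k - 1`, so the node itself carries at most `2 (k - 1) + 1 = 2k - 1`. -/

open BinaryTree

theorem markedCount_node_le (b : Bool) (l r : BinaryTree Bool) :
    markedCount (node b l r) ≤ markedCount l + markedCount r + 1 := by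
  simp only [markedCount]
  split <;> omega

theorem exists_isSubtree_lowest_node {k : ℕ} (hk : 1 ≤ k) :
    ∀ T : BinaryTree Bool, k ≤ markedCount T →
      ∃ b l r, isSubtree (node b l r) T ∧ k ≤ markedCount (node b l r) ∧
        markedCount l < k ∧ markedCount r < k
  | nil, hT => absurd hT (by simp only [markedCount]; omega)
  | node b l r, hT => by
    by_cases hl : k ≤ markedCount l
    · obtain ⟨b', l', r', hsub, hmarks⟩ := exists_isSubtree_lowest_node hk l hl
      exact ⟨b', l', r', Or.inr (Or.inl hsub), hmarks⟩
    by_cases hr : k ≤ markedCount r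
    · obtain ⟨b', l', r', hsub, hmarks⟩ := exists_isSubtree_lowest_node hk r hr
      exact ⟨b', l', r', Or.inr (Or.inr hsub), hmarks⟩
    exact ⟨b, l, r, Or.inl rfl, hT, by omega, by omega⟩

/-- The greedy decomposition step in the proof of Lemma 4: if a binary tree has
at least `k ≥ 1` marked nodes, then some node roots a subtree with at least `k`
and at most `2k - 1` marked nodes. -/
theorem exists_balanced_subtree (T : Tree Bool) (k : ℕ) (hk : 1 ≤ k)
    (hT : k ≤ markedCount T) :
    ∃ s : Tree Bool, isSubtree s T ∧ k ≤ markedCount s ∧ markedCount s ≤ 2 * k - 1 := by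
  obtain ⟨b, l, r, hsub, hlow, hl, hr⟩ := exists_isSubtree_lowest_node hk T hT
  have hnode := markedCount_node_le b l r
  exact ⟨node b l r, hsub, hlow, by omega⟩
end

section
/- Let s ≥ 1 and M ≥ 0 be real numbers and let Φ : ℕ × ℕ → ℝ be a nonnegative function such that Φ(0,0) ≤ M, Φ(0,k) = 0 for all k ≥ 1, and for all i ≥ 1 and all k: Φ(i,k) ≤ Σ_{j=0}^{k} Φ(i-1, k-j)/s^j. Then for all i and k: Φ(i,k) ≤ M · C(i+k-1, k) / s^k, where C denotes the binomial coefficient. (This is the solution, made precise including boundary cases, of the paper's recursion (19) for the potential function with depleted count d = 0: the expected total region area of pixilated living trees after i epochs of growth with k additional output cells is at most M·C(i+k−1,k)·(ε₀t)^{-k/2}, where s = √(ε₀ t).) -/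
lemma hockey_stick (i k : ℕ) :
    ∑ m ∈ Finset.range (k + 1), (i + m - 1).choose m = (i + k).choose k := by
  induction k with
  | zero => simp
  | succ k ih =>
    rw [Finset.sum_range_succ, ih]
    have h1 : i + (k + 1) - 1 = i + k := by omega
    have h2 : i + (k + 1) = (i + k) + 1 := by ring
    rw [h1, h2, Nat.choose_succ_succ]

/-- The solution of the paper's recursion (19) for the potential function with
depleted count `d = 0`: `Φ(i,k) ≤ M · C(i+k-1, k) / s^k`. -/
theorem potential_recursion_solution (s M : ℝ) (hs : 1 ≤ s) (hM : 0 ≤ M)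
    (Φ : ℕ × ℕ → ℝ) (hpos : ∀ p, 0 ≤ Φ p)
    (h00 : Φ (0, 0) ≤ M)
    (h0k : ∀ k, 1 ≤ k → Φ (0, k) = 0)
    (hrec : ∀ i k, 1 ≤ i →
      Φ (i, k) ≤ ∑ j ∈ Finset.range (k + 1), Φ (i - 1, k - j) / s ^ j) :
    ∀ i k, Φ (i, k) ≤ M * ((i + k - 1).choose k : ℝ) / s ^ k := by
  have hs0 : (0:ℝ) < s := lt_of_lt_of_le one_pos hs
  intro i
  induction i with
  | zero =>
    intro k
    match k with
    | 0 => simpa using h00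
    | (k + 1) =>
      rw [h0k (k + 1) (by omega)]
      have : (0 + (k + 1) - 1).choose (k + 1) = 0 :=
        Nat.choose_eq_zero_of_lt (by omega)
      rw [this]
      simp
  | succ i ih =>
    intro k
    calc Φ (i + 1, k) ≤ ∑ j ∈ Finset.range (k + 1), Φ (i + 1 - 1, k - j) / s ^ j :=
          hrec (i + 1) k (by omega)
      _ ≤ ∑ j ∈ Finset.range (k + 1),
            M * ((i + (k - j) - 1).choose (k - j) : ℝ) / s ^ k := by
          apply Finset.sum_le_sum
          intro j hj
          have hjk : j ≤ k := Nat.lt_succ_iff.mp (Finset.mem_range.mp hj)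
          have h1 : Φ (i + 1 - 1, k - j) / s ^ j
              ≤ (M * ((i + (k - j) - 1).choose (k - j) : ℝ) / s ^ (k - j)) / s ^ j := by
            gcongr
            exact ih (k - j)
          rw [div_div, ← pow_add, Nat.sub_add_cancel hjk] at h1
          exact h1
      _ = M * (∑ j ∈ Finset.range (k + 1),
            ((i + (k - j) - 1).choose (k - j) : ℝ)) / s ^ k := by
          rw [Finset.mul_sum, Finset.sum_div]
      _ = M * ((i + 1 + k - 1).choose k : ℝ) / s ^ k := by
          congr 2
          rw [← Nat.cast_sum]
          congr 1
          have hrefl : ∑ j ∈ Finset.range (k + 1), (i + (k - j) - 1).choose (k - j)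
              = ∑ m ∈ Finset.range (k + 1), (i + m - 1).choose m := by
            rw [← Finset.sum_range_reflect]
            apply Finset.sum_congr rfl
            intro j hj
            have hjk : j ≤ k := Nat.lt_succ_iff.mp (Finset.mem_range.mp hj)
            have h3 : k + 1 - 1 - j = k - j := by omega
            rw [h3, Nat.sub_sub_self hjk]
          rw [hrefl, hockey_stick]
          congr 1
          omega
end

section
/- Let s ≥ 1 and M ≥ 0 be reals and b ≥ 1 a natural number. Let Φ : ℕ × ℕ × ℕ → ℝ be a nonnegative function with Φ(0,0,0) ≤ M and Φ(0,k,d) = 0 whenever (k,d) ≠ (0,0), and suppose that for all i ≥ 1, all k, and all d: Φ(i,k,d) ≤ Σ_{j=0}^{k} Φ(i-1, k-j, d)/s^j + Σ_{j₁=1}^{min(2b,i)} Σ_{j₂=1}^{min(2b²,k)} Φ(i-j₁, k-j₂, d-1), where the second double sum is absent when d = 0. Then for all i, k, d: Φ(i,k,d) ≤ 4^{i+k+d} · M · C(i+k-1, k) · s^{2b²(d+1) - k}, where C denotes the binomial coefficient and the power of s is an integer power (possibly with negative exponent). (This is the solution, with precise boundary cases and constants, of the paper's full potential-function recursion combining cases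 (18) and its depleted-count terms, yielding the bound (21) on E[Φ(i,k,d·t^{0.1})].) -/
/-!
Strong induction on `i`. Moving from `(i, k, d)` to a predecessor `(i', k', d')` loses a factor
`4` per unit of `(i + k + d) - (i' + k' + d')` in the bound while the binomial coefficient can only
shrink. In the first sum the shift `k ↦ k - j` gains `s ^ j` in the exponent, which the weight
`s ^ (-j)` cancels exactly, so that sum is at most `∑ 4^(-(j+1)) ≤ 1/3` of the bound. In the double
sum, decreasing `d` costs `s ^ (2 b²)` and decreasing `k` by `j₂ ≤ 2 b²` gains `s ^ j₂`, so it is at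
most `(1/4) (4/3)² = 4/9` of the bound. As `1/3 + 4/9 < 1`, the bound propagates.
-/

open Finset

theorem Nat.choose_le_choose_add_add (n r j : ℕ) : n.choose r ≤ (n + j).choose (r + j) := by
  induction j with
  | zero => rfl
  | succ j ih =>
    rw [← add_assoc, ← add_assoc, Nat.choose_succ_succ']
    exact ih.trans (Nat.le_add_right _ _)

theorem Nat.choose_pred_add_le {i k i' k' : ℕ} (hi : 1 ≤ i) (hi' : i' ≤ i) (hk' : k' ≤ k) :
    (i' + k' - 1).choose k' ≤ (i + k - 1).choose k := by
  calc (i' + k' - 1).choose k' ≤ (i + k' - 1).choose k' := Nat.choose_le_choose _ (by omega)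
    _ ≤ (i + k' - 1 + (k - k')).choose (k' + (k - k')) := Nat.choose_le_choose_add_add _ _ _
    _ = (i + k - 1).choose k := by congr 1 <;> omega

theorem sum_quarter_pow_le (S : Finset ℕ) : ∑ j ∈ S, (1 / 4 : ℝ) ^ j ≤ 4 / 3 := by
  have hsum := summable_geometric_of_lt_one (r := (1 / 4 : ℝ)) (by norm_num) (by norm_num)
  calc ∑ j ∈ S, (1 / 4 : ℝ) ^ j ≤ ∑' j, (1 / 4 : ℝ) ^ j :=
        hsum.sum_le_tsum S fun _ _ => by positivity
    _ = 4 / 3 := by rw [tsum_geometric_of_lt_one (by norm_num) (by norm_num)]; norm_num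

theorem sum_quarter_pow_succ_le (S : Finset ℕ) : ∑ j ∈ S, (1 / 4 : ℝ) ^ (j + 1) ≤ 1 / 3 := by
  simp_rw [pow_succ, ← sum_mul]
  linarith [sum_quarter_pow_le S]

theorem sum_sum_quarter_pow_le (S T : Finset ℕ) :
    ∑ j₁ ∈ S, ∑ j₂ ∈ T, (1 / 4 : ℝ) ^ (j₁ + j₂ + 1) ≤ 4 / 9 := by
  have hT0 : 0 ≤ ∑ j ∈ T, (1 / 4 : ℝ) ^ j := sum_nonneg fun _ _ => by positivity
  calc ∑ j₁ ∈ S, ∑ j₂ ∈ T, (1 / 4 : ℝ) ^ (j₁ + j₂ + 1)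
      = (∑ j ∈ S, (1 / 4 : ℝ) ^ j) * (∑ j ∈ T, (1 / 4 : ℝ) ^ j) / 4 := by
        simp_rw [sum_mul_sum, sum_div, pow_succ, pow_add]; ring_nf
    _ ≤ 4 / 3 * (4 / 3) / 4 := by gcongr <;> exact sum_quarter_pow_le _
    _ = 4 / 9 := by norm_num

noncomputable def potentialBound (s M : ℝ) (b i k d : ℕ) : ℝ :=
  4 ^ (i + k + d) * M * ((i + k - 1).choose k : ℝ) * s ^ ((2 * b ^ 2 * (d + 1) : ℤ) - (k : ℤ))

namespace potentialBound

variable {s M : ℝ} {b : ℕ}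

theorem nonneg (hs : 0 ≤ s) (hM : 0 ≤ M) (i k d : ℕ) : 0 ≤ potentialBound s M b i k d := by
  unfold potentialBound; positivity

theorem le_zero_zero_zero (hs : 1 ≤ s) (hM : 0 ≤ M) : M ≤ potentialBound s M b 0 0 0 := by
  have : (1 : ℝ) ≤ s ^ (2 * b ^ 2 * ((0 : ℕ) + 1) - ((0 : ℕ) : ℤ) : ℤ) :=
    one_le_zpow₀ hs (by simp)
  simpa [potentialBound] using le_mul_of_one_le_right hM this

theorem le_quarter_pow_mul (hs : 0 < s) (hM : 0 ≤ M) {i k d i' k' d' n : ℕ} (hi : 1 ≤ i)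
    (hi' : i' ≤ i) (hk' : k' ≤ k) (hn : i' + k' + d' + n = i + k + d) :
    potentialBound s M b i' k' d' ≤
      (1 / 4) ^ n * s ^ ((2 * b ^ 2 * (d' + 1) - k' : ℤ) - (2 * b ^ 2 * (d + 1) - k)) *
        potentialBound s M b i k d := by
  have hchoose : ((i' + k' - 1).choose k' : ℝ) ≤ (i + k - 1).choose k := by
    exact_mod_cast Nat.choose_pred_add_le hi hi' hk'
  have h4 : (4 : ℝ) ^ (i' + k' + d') = (1 / 4) ^ n * 4 ^ (i + k + d) := by
    rw [← hn, pow_add _ (i' + k' + d'), one_div_pow]; field_simp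
  have hzpow : s ^ (2 * b ^ 2 * (d' + 1) - k' : ℤ) =
      s ^ ((2 * b ^ 2 * (d' + 1) - k' : ℤ) - (2 * b ^ 2 * (d + 1) - k)) *
        s ^ (2 * b ^ 2 * (d + 1) - k : ℤ) := by
    rw [← zpow_add₀ hs.ne', sub_add_cancel]
  unfold potentialBound
  rw [h4, hzpow]
  calc _ = (1 / 4) ^ n * s ^ ((2 * b ^ 2 * (d' + 1) - k' : ℤ) - (2 * b ^ 2 * (d + 1) - k)) *
        (4 ^ (i + k + d) * M * ((i' + k' - 1).choose k' : ℝ) *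
          s ^ (2 * b ^ 2 * (d + 1) - k : ℤ)) := by ring
    _ ≤ _ := by gcongr

variable {Φ : ℕ → ℕ → ℕ → ℝ} {i : ℕ}

theorem sum_growth_le (hs : 1 ≤ s) (hM : 0 ≤ M) (hi : 1 ≤ i)
    (hΦ : ∀ i' < i, ∀ k d, Φ i' k d ≤ potentialBound s M b i' k d) (k d : ℕ) :
    ∑ j ∈ range (k + 1), Φ (i - 1) (k - j) d / s ^ j ≤ 1 / 3 * potentialBound s M b i k d := by
  have hs0 : 0 < s := one_pos.trans_le hs
  have hterm : ∀ j ∈ range (k + 1),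
      Φ (i - 1) (k - j) d / s ^ j ≤ (1 / 4) ^ (j + 1) * potentialBound s M b i k d := by
    intro j hj
    have hjk : j ≤ k := Nat.lt_succ_iff.mp (mem_range.mp hj)
    have hexp : (2 * b ^ 2 * (d + 1) - (k - j : ℕ) : ℤ) - (2 * b ^ 2 * (d + 1) - k) = j := by
      push_cast [hjk]; ring
    calc Φ (i - 1) (k - j) d / s ^ j ≤ potentialBound s M b (i - 1) (k - j) d / s ^ j := by
          gcongr; exact hΦ _ (by omega) _ _
      _ ≤ (1 / 4) ^ (j + 1) * s ^ (j : ℤ) * potentialBound s M b i k d / s ^ j := by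
          gcongr
          simpa only [hexp] using le_quarter_pow_mul (b := b) (d := d) (d' := d) (n := j + 1) hs0 hM hi
            (Nat.sub_le i 1) (Nat.sub_le k j) (by omega)
      _ = (1 / 4) ^ (j + 1) * potentialBound s M b i k d := by
          rw [zpow_natCast]; field_simp
  calc _ ≤ ∑ j ∈ range (k + 1), (1 / 4) ^ (j + 1) * potentialBound s M b i k d :=
        sum_le_sum hterm
    _ ≤ 1 / 3 * potentialBound s M b i k d := by
      rw [← sum_mul]
      exact mul_le_mul_of_nonneg_right (sum_quarter_pow_succ_le _) (nonneg hs0.le hM _ _ _)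

theorem sum_depleted_le (hs : 1 ≤ s) (hM : 0 ≤ M) (hi : 1 ≤ i)
    (hΦ : ∀ i' < i, ∀ k d, Φ i' k d ≤ potentialBound s M b i' k d) (k : ℕ) {d : ℕ} (hd : 1 ≤ d) :
    ∑ j₁ ∈ Icc 1 (min (2 * b) i), ∑ j₂ ∈ Icc 1 (min (2 * b ^ 2) k), Φ (i - j₁) (k - j₂) (d - 1) ≤
      4 / 9 * potentialBound s M b i k d := by
  have hs0 : 0 < s := one_pos.trans_le hs
  have hterm : ∀ j₁ ∈ Icc 1 (min (2 * b) i), ∀ j₂ ∈ Icc 1 (min (2 * b ^ 2) k),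
      Φ (i - j₁) (k - j₂) (d - 1) ≤ (1 / 4) ^ (j₁ + j₂ + 1) * potentialBound s M b i k d := by
    intro j₁ hj₁ j₂ hj₂
    simp only [mem_Icc, le_min_iff] at hj₁ hj₂
    have hexp : (2 * b ^ 2 * ((d - 1 : ℕ) + 1) - (k - j₂ : ℕ) : ℤ) -
        (2 * b ^ 2 * (d + 1) - k) ≤ 0 := by
      have : (j₂ : ℤ) ≤ 2 * b ^ 2 := by exact_mod_cast hj₂.2.1
      push_cast [hd, hj₂.2.2]; linarith
    calc Φ (i - j₁) (k - j₂) (d - 1) ≤ potentialBound s M b (i - j₁) (k - j₂) (d - 1) :=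
          hΦ _ (by omega) _ _
      _ ≤ (1 / 4) ^ (j₁ + j₂ + 1) * s ^ _ * potentialBound s M b i k d :=
          le_quarter_pow_mul hs0 hM hi (Nat.sub_le i j₁) (Nat.sub_le k j₂) (by omega)
      _ ≤ (1 / 4) ^ (j₁ + j₂ + 1) * 1 * potentialBound s M b i k d := by
          gcongr
          · exact nonneg hs0.le hM _ _ _
          · exact zpow_le_one_of_nonpos₀ hs hexp
      _ = (1 / 4) ^ (j₁ + j₂ + 1) * potentialBound s M b i k d := by rw [mul_one]
  calc _ ≤ ∑ j₁ ∈ Icc 1 (min (2 * b) i), ∑ j₂ ∈ Icc 1 (min (2 * b ^ 2) k),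
          (1 / 4) ^ (j₁ + j₂ + 1) * potentialBound s M b i k d :=
        sum_le_sum fun j₁ hj₁ => sum_le_sum fun j₂ hj₂ => hterm j₁ hj₁ j₂ hj₂
    _ ≤ 4 / 9 * potentialBound s M b i k d := by
      simp_rw [← sum_mul]
      exact mul_le_mul_of_nonneg_right (sum_sum_quarter_pow_le _ _) (nonneg hs0.le hM _ _ _)

end potentialBound

theorem full_potential_recursion_solution_general (s M : ℝ) (hs : 1 ≤ s) (hM : 0 ≤ M)
    (b : ℕ)
    (Φ : ℕ → ℕ → ℕ → ℝ)
    (h000 : Φ 0 0 0 ≤ M)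
    (h0 : ∀ k d, (k, d) ≠ (0, 0) → Φ 0 k d = 0)
    (hrec0 : ∀ i k, 1 ≤ i →
      Φ i k 0 ≤ ∑ j ∈ Finset.range (k + 1), Φ (i - 1) (k - j) 0 / s ^ j)
    (hrec : ∀ i k d, 1 ≤ i → 1 ≤ d →
      Φ i k d ≤ (∑ j ∈ Finset.range (k + 1), Φ (i - 1) (k - j) d / s ^ j) +
        ∑ j₁ ∈ Finset.Icc 1 (min (2 * b) i), ∑ j₂ ∈ Finset.Icc 1 (min (2 * b ^ 2) k),
          Φ (i - j₁) (k - j₂) (d - 1)) :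
    ∀ i k d, Φ i k d ≤
      4 ^ (i + k + d) * M * ((i + k - 1).choose k : ℝ) *
        s ^ ((2 * b ^ 2 * (d + 1) : ℤ) - (k : ℤ)) := by
  suffices h : ∀ i k d, Φ i k d ≤ potentialBound s M b i k d from h
  have hB := potentialBound.nonneg (b := b) (zero_le_one.trans hs) hM
  intro i
  induction i using Nat.strong_induction_on with
  | _ i ih =>
  intro k d
  rcases Nat.eq_zero_or_pos i with rfl | hi
  · by_cases hkd : (k, d) = (0, 0)
    · obtain ⟨rfl, rfl⟩ := Prod.mk.inj hkd
      exact h000.trans (potentialBound.le_zero_zero_zero hs hM)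
    · rw [h0 k d hkd]; exact hB _ _ _
  · rcases Nat.eq_zero_or_pos d with rfl | hd
    · linarith [hrec0 i k hi, potentialBound.sum_growth_le hs hM hi ih k 0, hB i k 0]
    · linarith [hrec i k d hi hd, potentialBound.sum_growth_le hs hM hi ih k d,
        potentialBound.sum_depleted_le hs hM hi ih k hd, hB i k d]

/-- The solution of the paper's full potential-function recursion, combining the
fit/dense growth term and the depleted-count term, yielding bound (21):
`Φ(i,k,d) ≤ 4^{i+k+d} · M · C(i+k-1,k) · s^{2b²(d+1) - k}`. -/
theorem full_potential_recursion_solution (s M : ℝ) (hs : 1 ≤ s) (hM : 0 ≤ M)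
    (b : ℕ) (hb : 1 ≤ b)
    (Φ : ℕ → ℕ → ℕ → ℝ) (hpos : ∀ i k d, 0 ≤ Φ i k d)
    (h000 : Φ 0 0 0 ≤ M)
    (h0 : ∀ k d, (k, d) ≠ (0, 0) → Φ 0 k d = 0)
    (hrec0 : ∀ i k, 1 ≤ i →
      Φ i k 0 ≤ ∑ j ∈ Finset.range (k + 1), Φ (i - 1) (k - j) 0 / s ^ j)
    (hrec : ∀ i k d, 1 ≤ i → 1 ≤ d →
      Φ i k d ≤ (∑ j ∈ Finset.range (k + 1), Φ (i - 1) (k - j) d / s ^ j) +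
        ∑ j₁ ∈ Finset.Icc 1 (min (2 * b) i), ∑ j₂ ∈ Finset.Icc 1 (min (2 * b ^ 2) k),
          Φ (i - j₁) (k - j₂) (d - 1)) :
    ∀ i k d, Φ i k d ≤
      4 ^ (i + k + d) * M * ((i + k - 1).choose k : ℝ) *
        s ^ ((2 * b ^ 2 * (d + 1) : ℤ) - (k : ℤ)) :=
  full_potential_recursion_solution_general s M hs hM b Φ h000 h0 hrec0 hrec
end
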